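/- arXiv:1809.01996 — 2 statements merged into one kernel-verified Lean document; each statement's English description precedes it below -/
import Mathlib

section
/- If π: M → N is a homomorphism of systemic modules and ν: N → M is a ⪯-morphism with 1_N ⪯ π∘ν, then the map 1_M (-) ν∘π (sending b to b (-) νπ(b)) is ⪯-idempotent, i.e., applying it twice surpasses applying it once pointwise. -/
universe u v w

/-- A (commutative) semiring system `(A, 𝒯, (-), ⪯)`: a commutative semiring with a
distinguished set of tangible elements, a negation map and a surpassing relation. -/
class SysRing (A : Type u) extends CommSemiring A where
  tangible : Set A
  neg : A → A
  sle : A → A → Prop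
  sle_refl : ∀ a : A, sle a a
  sle_trans : ∀ {a b c : A}, sle a b → sle b c → sle a c
  neg_neg : ∀ a : A, neg (neg a) = a
  neg_add : ∀ a b : A, neg (a + b) = neg a + neg b
  neg_zero : neg (0 : A) = 0
  neg_mul : ∀ a ∈ tangible, ∀ b : A, neg (a * b) = a * neg b
  sle_add : ∀ {a b a' b' : A}, sle a b → sle a' b' → sle (a + a') (b + b')
  sle_neg : ∀ {a b : A}, sle a b → sle (neg a) (neg b)
  sle_quasi : ∀ a : A, sle 0 (a + neg a)
  sle_mul : ∀ a ∈ tangible, ∀ {b b' : A}, sle b b' → sle (a * b) (a * b')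
  tangible_eq : ∀ a ∈ tangible, ∀ b ∈ tangible, sle a b → a = b
  tangible_gen : ∀ a : A, ∃ s : Multiset A, (∀ x ∈ s, x ∈ tangible) ∧ s.sum = a

/-- A systemic module `(M, 𝒯_M, (-), ⪯)` over a semiring system `A`. -/
class SysMod (A : outParam (Type u)) [SysRing A] (M : Type v) extends
    AddCommMonoid M, Module A M where
  tmod : Set M
  neg : M → M
  sle : M → M → Prop
  sle_refl : ∀ a : M, sle a a
  sle_trans : ∀ {a b c : M}, sle a b → sle b c → sle a c
  neg_neg : ∀ a : M, neg (neg a) = a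
  neg_add : ∀ a b : M, neg (a + b) = neg a + neg b
  neg_zero : neg (0 : M) = 0
  neg_smul : ∀ a ∈ SysRing.tangible (A := A), ∀ m : M, neg (a • m) = a • neg m
  sle_add : ∀ {a b a' b' : M}, sle a b → sle a' b' → sle (a + a') (b + b')
  sle_neg : ∀ {a b : M}, sle a b → sle (neg a) (neg b)
  sle_quasi : ∀ a : M, sle 0 (a + neg a)
  sle_smul : ∀ a ∈ SysRing.tangible (A := A), ∀ {m m' : M}, sle m m' → sle (a • m) (a • m')
  tmod_gen : ∀ m : M, ∃ s : Multiset M, (∀ x ∈ s, x ∈ tmod) ∧ s.sum = m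

section Morphisms

variable {A : Type u} [SysRing A] {M : Type v} {N : Type w} [SysMod A M] [SysMod A N]

/-- A `⪯`-morphism of systemic modules. -/
structure IsPrecMorphism (f : M → N) : Prop where
  map_zero : f 0 = 0
  map_neg : ∀ m : M, f (SysMod.neg m) = SysMod.neg (f m)
  map_add_le : ∀ m m' : M, SysMod.sle (f (m + m')) (f m + f m')
  map_smul : ∀ a ∈ SysRing.tangible (A := A), ∀ m : M, f (a • m) = a • f m
  mono : ∀ {m m' : M}, SysMod.sle m m' → SysMod.sle (f m) (f m')

/-- A `⪰`-morphism of systemic modules. -/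
structure IsSucMorphism (f : M → N) : Prop where
  map_zero : f 0 = 0
  map_neg : ∀ m : M, f (SysMod.neg m) = SysMod.neg (f m)
  map_add_ge : ∀ m m' : M, SysMod.sle (f m + f m') (f (m + m'))
  map_smul : ∀ a ∈ SysRing.tangible (A := A), ∀ m : M, f (a • m) = a • f m
  mono : ∀ {m m' : M}, SysMod.sle m m' → SysMod.sle (f m) (f m')

/-- A homomorphism of systemic modules. -/
structure IsHom (f : M → N) : Prop where
  map_zero : f 0 = 0
  map_neg : ∀ m : M, f (SysMod.neg m) = SysMod.neg (f m)
  map_add : ∀ m m' : M, f (m + m') = f m + f m'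
  map_smul : ∀ a ∈ SysRing.tangible (A := A), ∀ m : M, f (a • m) = a • f m
  mono : ∀ {m m' : M}, SysMod.sle m m' → SysMod.sle (f m) (f m')

/-- `f` is `⪯`-onto. -/
def PrecOnto (f : M → N) : Prop := ∀ b : N, ∃ m : M, SysMod.sle b (f m)

/-- The null set `M_Null = {m : m ⪰ 0}`. -/
def nullSet (A : Type u) [SysRing A] (M : Type v) [SysMod A M] : Set M :=
  {m : M | SysMod.sle (0 : M) m}

/-- The null-module kernel of `f : M → N`: the sum of all `f`-null submodules of `M`. -/
def modKer (f : M → N) : Submodule A M :=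
  sSup {S : Submodule A M | ∀ x ∈ S, SysMod.sle (0 : N) (f x)}

end Morphisms

/-- If `π : M → N` is a homomorphism and `ν : N → M` a `⪯`-morphism with `1_N ⪯ π∘ν`,
then `1_M (-) ν∘π` is `⪯`-idempotent: applying it twice surpasses applying it once. -/
theorem stmt7 {A : Type u} [SysRing A] {M N : Type v} [SysMod A M] [SysMod A N]
    (π : M → N) (ν : N → M)
    (hπ : IsHom π) (hν : IsPrecMorphism ν)
    (hsplit : ∀ b : N, SysMod.sle b (π (ν b))) :
    ∀ b : M,
      SysMod.sle ((fun m => m + SysMod.neg (ν (π m))) b)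
        ((fun m => m + SysMod.neg (ν (π m)))
          ((fun m => m + SysMod.neg (ν (π m))) b)) := by
  intro b
  simp only
  have h1 : SysMod.sle (0:N) (π (b + SysMod.neg (ν (π b)))) := by
    rw [hπ.map_add, hπ.map_neg]
    exact SysMod.sle_trans (SysMod.sle_quasi (π b))
      (SysMod.sle_add (SysMod.sle_refl _) (SysMod.sle_neg (hsplit (π b))))
  have h2 : SysMod.sle (0:M) (SysMod.neg (ν (π (b + SysMod.neg (ν (π b)))))) := by
    have h := SysMod.sle_neg (hν.mono h1)
    rwa [hν.map_zero, SysMod.neg_zero] at h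
  have h3 := SysMod.sle_add (SysMod.sle_refl (b + SysMod.neg (ν (π b)))) h2
  rwa [add_zero] at h3
end

section
/- Let π: M → N be a homomorphism of systemic modules that is ⪯-split by a ⪯-morphism ν: N → M (i.e., 1_N ⪯ πν). Then M is the ⪯-direct sum of M1 = π(M) and M2 = (1_M (-) νπ)(M) with respect to π1 = π, ν1 = ν, π2 = 1_M (-) νπ, ν2 = inclusion: namely 1_M ⪯ ν1π1 + ν2π2, 1_{M_i} ⪯ π_i ν_i, and 0 ⪯ π_j ν_i for i ≠ j. -/
universe u v w

/-- If a homomorphism `π : M → N` is `⪯`-split by a `⪯`-morphism `ν` (`1_N ⪯ πν`), then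
`M` is the `⪯`-direct sum of `M1 = π(M)` and `M2 = (1_M (-) νπ)(M)`, with respect to
`π1 = π`, `ν1 = ν`, `π2 = 1_M (-) νπ`, `ν2 = inclusion`: namely `1_M ⪯ ν1π1 + ν2π2`,
`1_{M_i} ⪯ π_i ν_i`, and `0 ⪯ π_j ν_i` for `i ≠ j` (elements of `M1` are the values
`π b`, and elements of `M2` the values `π2 b`). -/
theorem stmt13 {A : Type u} [SysRing A] {M N : Type v} [SysMod A M] [SysMod A N]
    (π : M → N) (ν : N → M)
    (hπ : IsHom π) (hν : IsPrecMorphism ν)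
    (hsplit : ∀ b : N, SysMod.sle b (π (ν b))) :
    ∀ π2 : M → M, π2 = (fun m => m + SysMod.neg (ν (π m))) →
    (∀ b : M, SysMod.sle b (ν (π b) + π2 b)) ∧
    (∀ b : M, SysMod.sle (π b) (π (ν (π b)))) ∧
    (∀ b : M, SysMod.sle (π2 b) (π2 (π2 b))) ∧
    (∀ b : M, SysMod.sle (0 : N) (π (π2 b))) ∧
    (∀ b : M, SysMod.sle (0 : M) (π2 (ν (π b)))) := by
  intro π2 hπ2
  subst hπ2
  have g4 : ∀ b : M, SysMod.sle (0 : N) (π (b + SysMod.neg (ν (π b)))) := by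
    intro b
    rw [hπ.map_add, hπ.map_neg]
    have h1 := SysMod.sle_neg (hsplit (π b))
    have h2 := SysMod.sle_add (SysMod.sle_refl (π b)) h1
    exact SysMod.sle_trans (SysMod.sle_quasi (π b)) h2
  refine ⟨?_, fun b => hsplit (π b), ?_, g4, ?_⟩
  · intro b
    have h := SysMod.sle_add (SysMod.sle_quasi (ν (π b))) (SysMod.sle_refl b)
    rw [zero_add] at h
    have : ν (π b) + SysMod.neg (ν (π b)) + b
        = ν (π b) + (b + SysMod.neg (ν (π b))) := by rw [add_assoc, add_comm (SysMod.neg (ν (π b))) b]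
    rw [this] at h
    exact h
  · intro b
    set x := b + SysMod.neg (ν (π b)) with hx
    have h0 : SysMod.sle (0 : M) (SysMod.neg (ν (π x))) := by
      have := hν.mono (g4 b)
      rw [hν.map_zero] at this
      have := SysMod.sle_neg this
      rwa [SysMod.neg_zero] at this
    have h := SysMod.sle_add (SysMod.sle_refl x) h0
    rwa [add_zero] at h
  · intro b
    set x := ν (π b) with hx
    have hx2 : SysMod.sle x (ν (π x)) := hν.mono (hsplit (π b))
    have h1 := SysMod.sle_neg hx2
    have h2 := SysMod.sle_add (SysMod.sle_refl x) h1
    exact SysMod.sle_trans (SysMod.sle_quasi x) h2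
end
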